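/- Let ⟨U, Γ⟩ be a parallelism structure with covariant derivative ∇ and λ an invertible smooth (1,1)-extensor operator field on U. Define the λ-deformed connection by Γ^λ(a,v) = λ(Γ(a, λ^{-1}(v))). Then Γ^λ is again a connection (satisfying strong linearity in the first argument and the Leibniz quasi-linearity in the second), and its covariant derivative satisfies ∇^λ_a v = λ(∇_a λ^{-1}(v)) on vector fields and ∇^λ_a ω = λ^{-△}(∇_a λ^△(ω)) on 1-form fields, where λ^△ is the pointwise transpose of λ. -/

import Mathlib

/-! `A` models the smooth functions on `U`, the `A`-modules `V`, `W` model vector fields,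
and `act a f` is the directional derivative `a f`. Conjugating `Γ` by the module
isomorphism `λ` keeps the direction `a` fixed, so linearity in `a` is inherited directly,
and the Leibniz terms `(a f) v` pass through `λ` unchanged because `λ ∘ λ⁻¹ = id`. -/

section DeformConnection

variable {A V W : Type*}

def deformConnection [Semiring A] [AddCommMonoid V] [Module A V] [AddCommMonoid W]
    [Module A W] (e : V ≃ₗ[A] W) (Γ : V → V → V) (a : V) (w : W) : W :=
  e (Γ a (e.symm w))

def covDerivDual [Ring A] [AddCommGroup V] [Module A V] [AddCommGroup W] [Module A W]
    (act : V → A → A) (Γ : V → W → W) (a : V) (ω : Module.Dual A W) (w : W) : A :=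
  act a (ω w) - ω (Γ a w)

variable [CommSemiring A] [AddCommMonoid V] [Module A V] [AddCommMonoid W] [Module A W]

theorem deformConnection_add_smul_left (e : V ≃ₗ[A] W) {Γ : V → V → V}
    (hΓ : ∀ (f g : A) (a b v : V), Γ (f • a + g • b) v = f • Γ a v + g • Γ b v)
    (f g : A) (a b : V) (w : W) :
    deformConnection e Γ (f • a + g • b) w =
      f • deformConnection e Γ a w + g • deformConnection e Γ b w := by
  simp only [deformConnection, hΓ, map_add, map_smul]

theorem deformConnection_add_smul_right (e : V ≃ₗ[A] W) {act : V → A → A} {Γ : V → V → V}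
    (hΓ : ∀ (f g : A) (a v w : V),
      Γ a (f • v + g • w) = act a f • v + act a g • w + f • Γ a v + g • Γ a w)
    (f g : A) (a : V) (v w : W) :
    deformConnection e Γ a (f • v + g • w) =
      act a f • v + act a g • w + f • deformConnection e Γ a v + g • deformConnection e Γ a w := by
  simp only [deformConnection, map_add, map_smul, hΓ, e.apply_symm_apply]

end DeformConnection

theorem covDerivDual_deformConnection {A V W : Type*} [CommRing A] [AddCommGroup V]
    [Module A V] [AddCommGroup W] [Module A W] (e : V ≃ₗ[A] W) (act : V → A → A)
    (Γ : V → V → V) (a : V) (ω : Module.Dual A W) (w : W) :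
    covDerivDual act (deformConnection e Γ) a ω w =
      covDerivDual act Γ a (e.toLinearMap.dualMap ω) (e.symm w) := by
  simp [covDerivDual, deformConnection, LinearMap.dualMap_apply]

/-- The `λ`-deformation of a parallelism structure.  The commutative ring `A` models
the smooth scalar fields on `U`, the `A`-module `V` models the smooth vector fields,
`act a f` models the directional derivative `af` of a scalar field `f` along `a`, and
`Γ : V → V → V` is a connection: strongly linear in its first argument and
quasi-linear (Leibniz) in its second.  For an invertible `(1,1)`-extensor operator
field `λ` (an `A`-linear automorphism of `V`), the deformed connection
`Γ^λ(a,v) = λ(Γ(a, λ⁻¹ v))` is again a connection, its covariant derivative satisfies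
`∇^λ_a v = λ(∇_a λ⁻¹(v))` on vector fields, and on `1`-form fields
`∇^λ_a ω = λ^{-△}(∇_a λ^△(ω))`, i.e. pointwise
`(∇^λ_a ω)(v) = (∇_a(ω ∘ λ))(λ⁻¹ v)`, where `(∇_a ω)(v) = a(ω(v)) − ω(∇_a v)` and
`λ^△` is the pointwise transpose. -/
theorem deformed_connection
    (A : Type*) [CommRing A] (V : Type*) [AddCommGroup V] [Module A V]
    (act : V → A → A)
    (Γ : V → V → V)
    (hΓ1 : ∀ (f g : A) (a b v : V),
      Γ (f • a + g • b) v = f • Γ a v + g • Γ b v)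
    (hΓ2 : ∀ (f g : A) (a v w : V),
      Γ a (f • v + g • w) = act a f • v + act a g • w + f • Γ a v + g • Γ a w)
    (lam : V ≃ₗ[A] V) :
    let Γl : V → V → V := fun a v => lam (Γ a (lam.symm v))
    -- `Γ^λ` is strongly linear in the first variable
    (∀ (f g : A) (a b v : V),
      Γl (f • a + g • b) v = f • Γl a v + g • Γl b v) ∧
    -- `Γ^λ` is quasi-linear (Leibniz) in the second variable
    (∀ (f g : A) (a v w : V),
      Γl a (f • v + g • w) = act a f • v + act a g • w + f • Γl a v + g • Γl a w) ∧
    -- `∇^λ_a v = λ(∇_a λ⁻¹(v))` on vector fields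
    (∀ a v, Γl a v = lam (Γ a (lam.symm v))) ∧
    -- `∇^λ_a ω = λ^{-△}(∇_a λ^△(ω))` on `1`-form fields, pointwise
    (∀ (a : V) (ω : Module.Dual A V) (v : V),
      act a (ω v) - ω (Γl a v) =
        act a ((lam.toLinearMap.dualMap ω) (lam.symm v)) -
          (lam.toLinearMap.dualMap ω) (Γ a (lam.symm v))) :=
  ⟨deformConnection_add_smul_left lam hΓ1, deformConnection_add_smul_right lam hΓ2,
    fun _ _ => rfl, covDerivDual_deformConnection lam act Γ⟩
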